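/- Let X be a set, let μ₁ and μ₂ be sub-distributions over X with finite support, and let (E_n)_{n∈ℕ} be a monotonically increasing chain of cost functions X × X → [0,∞] converging pointwise to E : X × X → [0,∞]. Then the Kantorovich lifting is continuous in the cost: K_E(μ₁, μ₂) = lim_{n→∞} K_{E_n}(μ₁, μ₂) = sup_{n∈ℕ} K_{E_n}(μ₁, μ₂). -/

import Mathlib

open scoped ENNReal

/-- A sub-distribution over `X`: a `[0,∞]`-valued mass function with total mass at most 1
(countability of the support is automatic since the total mass is finite). -/
def IsSubdist {X : Type*} (μ : X → ℝ≥0∞) : Prop := ∑' x, μ x ≤ 1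

/-- A (probability) distribution over `X`: total mass exactly 1. -/
def IsDist {X : Type*} (μ : X → ℝ≥0∞) : Prop := ∑' x, μ x = 1

/-- `μ` is a coupling of `μ₁` and `μ₂`: its first and second marginals are `μ₁` and `μ₂`. -/
def IsCoupling {X : Type*} (μ : X × X → ℝ≥0∞) (μ₁ μ₂ : X → ℝ≥0∞) : Prop :=
  (∀ x₁, ∑' x₂, μ (x₁, x₂) = μ₁ x₁) ∧ (∀ x₂, ∑' x₁, μ (x₁, x₂) = μ₂ x₂)

/-- Expected cost of `E` under a mass function `μ` on pairs. -/
noncomputable def expCost {X : Type*} (E : X × X → ℝ≥0∞) (μ : X × X → ℝ≥0∞) : ℝ≥0∞ :=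
  ∑' p, E p * μ p

/-- Kantorovich lifting of a cost function `E` (infimum of expected cost over couplings;
`∞` if there is no coupling). -/
noncomputable def kant {X : Type*} (E : X × X → ℝ≥0∞) (μ₁ μ₂ : X → ℝ≥0∞) : ℝ≥0∞ :=
  ⨅ (μ : X × X → ℝ≥0∞) (_ : IsCoupling μ μ₁ μ₂), expCost E μ

/-- Total variation distance `(1/2) Σ_x |μ₁(x) − μ₂(x)|`. -/
noncomputable def tv {X : Type*} (μ₁ μ₂ : X → ℝ≥0∞) : ℝ≥0∞ :=
  (1 / 2) * ∑' x, max (μ₁ x - μ₂ x) (μ₂ x - μ₁ x)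

open Filter

/-! By monotone convergence, `expCost E` is the increasing limit of the lower semicontinuous
functions `expCost (En n)` of the coupling. With finite supports the marginal conditions are
finite sums, so the couplings form a closed, hence compact, subset of `X × X → ℝ≥0∞`. On a
compact set the infimum of an increasing supremum of lower semicontinuous functions `f i` is
the supremum of their infima: for `t` below the former, the open sets `{f i > t}` cover the
compact set, so by a finite subcover and monotonicity a single one contains it. -/

theorem ENNReal.lowerSemicontinuous_const_mul (c : ℝ≥0∞) :
    LowerSemicontinuous (c * ·) := by
  intro x
  by_cases h : c ≠ ⊤ ∨ x ≠ 0
  · exact (ENNReal.continuousAt_const_mul h).lowerSemicontinuousAt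
  · obtain rfl : x = 0 := (by simpa using h : c = ⊤ ∧ x = 0).2
    exact lowerSemicontinuousAt_iff.2 fun y hy => by simp at hy

theorem ENNReal.tsum_iSup_of_monotone {α ι : Type*} [Preorder ι] [IsDirectedOrder ι]
    {f : ι → α → ℝ≥0∞} (hf : Monotone f) :
    ∑' a, ⨆ i, f i a = ⨆ i, ∑' a, f i a := by
  simp_rw [ENNReal.tsum_eq_iSup_sum,
    ENNReal.finsetSum_iSup_of_monotone fun a _ _ hij => hf hij a]
  exact iSup_comm

theorem IsCompact.iInf_iSup_eq_iSup_iInf_of_monotone {α β ι : Type*} [TopologicalSpace α]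
    [CompleteLinearOrder β] [DenselyOrdered β] [Preorder ι] [IsDirectedOrder ι] [Nonempty ι]
    {s : Set α} (hs : IsCompact s) {f : ι → α → β} (hf : Monotone f)
    (hlsc : ∀ i, LowerSemicontinuous (f i)) :
    ⨅ x ∈ s, ⨆ i, f i x = ⨆ i, ⨅ x ∈ s, f i x := by
  refine le_antisymm ?_ (iSup_le fun i => iInf₂_mono fun x _ => le_iSup (f · x) i)
  by_contra! hlt
  obtain ⟨t, ht_sup, ht_inf⟩ := exists_between hlt
  have hcover : s ⊆ ⋃ i, f i ⁻¹' Set.Ioi t := fun x hx =>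
    Set.mem_iUnion.2 (lt_iSup_iff.1 (ht_inf.trans_le (iInf₂_le x hx)))
  obtain ⟨I, hI⟩ := hs.elim_finite_subcover _ (fun i => (hlsc i).isOpen_preimage t) hcover
  obtain ⟨M, hM⟩ := I.exists_le
  have hMt : t ≤ ⨅ x ∈ s, f M x := le_iInf₂ fun x hx => by
    obtain ⟨i, hi, hxi⟩ := Set.mem_iUnion₂.1 (hI hx)
    exact hxi.le.trans (hf (hM i hi) x)
  exact (hMt.trans (le_iSup (fun i => ⨅ x ∈ s, f i x) M)).not_gt ht_sup

theorem isClosed_setOf_support_subset {α M : Type*} [TopologicalSpace M] [T1Space M] [Zero M]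
    (s : Set α) : IsClosed {f : α → M | Function.support f ⊆ s} := by
  simp_rw [Function.support_subset_iff', Set.ofPred_forall]
  exact isClosed_iInter fun x => isClosed_iInter fun _ =>
    isClosed_singleton.preimage (continuous_apply x)

section Coupling

variable {X : Type*} {μ : X × X → ℝ≥0∞} {μ₁ μ₂ : X → ℝ≥0∞}

theorem IsCoupling.support_subset (h : IsCoupling μ μ₁ μ₂) :
    Function.support μ ⊆ Function.support μ₁ ×ˢ Function.support μ₂ := fun p hp =>
  ⟨fun h₀ => hp (nonpos_iff_eq_zero.1 (h₀ ▸ h.1 p.1 ▸ ENNReal.le_tsum p.2)),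
    fun h₀ => hp (nonpos_iff_eq_zero.1 (h₀ ▸ h.2 p.2 ▸ ENNReal.le_tsum p.1))⟩

theorem isCoupling_iff_of_finite_support (hfin₁ : (Function.support μ₁).Finite)
    (hfin₂ : (Function.support μ₂).Finite) :
    IsCoupling μ μ₁ μ₂ ↔ Function.support μ ⊆ Function.support μ₁ ×ˢ Function.support μ₂ ∧
      (∀ x₁, ∑ x₂ ∈ hfin₂.toFinset, μ (x₁, x₂) = μ₁ x₁) ∧
      ∀ x₂, ∑ x₁ ∈ hfin₁.toFinset, μ (x₁, x₂) = μ₂ x₂ := by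
  have hrow (hS : Function.support μ ⊆ Function.support μ₁ ×ˢ Function.support μ₂) (x₁ : X) :
      ∑' x₂, μ (x₁, x₂) = ∑ x₂ ∈ hfin₂.toFinset, μ (x₁, x₂) :=
    tsum_eq_sum' fun _ hx => hfin₂.mem_toFinset.2 (hS hx).2
  have hcol (hS : Function.support μ ⊆ Function.support μ₁ ×ˢ Function.support μ₂) (x₂ : X) :
      ∑' x₁, μ (x₁, x₂) = ∑ x₁ ∈ hfin₁.toFinset, μ (x₁, x₂) :=
    tsum_eq_sum' fun _ hx => hfin₁.mem_toFinset.2 (hS hx).1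
  constructor
  · intro h
    exact ⟨h.support_subset, fun x₁ => (hrow h.support_subset x₁).symm.trans (h.1 x₁),
      fun x₂ => (hcol h.support_subset x₂).symm.trans (h.2 x₂)⟩
  · rintro ⟨hS, h₁, h₂⟩
    exact ⟨fun x₁ => (hrow hS x₁).trans (h₁ x₁), fun x₂ => (hcol hS x₂).trans (h₂ x₂)⟩

theorem isClosed_setOf_isCoupling (hfin₁ : (Function.support μ₁).Finite)
    (hfin₂ : (Function.support μ₂).Finite) :
    IsClosed {μ : X × X → ℝ≥0∞ | IsCoupling μ μ₁ μ₂} := by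
  simp_rw [isCoupling_iff_of_finite_support hfin₁ hfin₂, Set.ofPred_and, Set.ofPred_forall]
  exact (isClosed_setOf_support_subset _).inter
    ((isClosed_iInter fun _ => isClosed_eq (by fun_prop) continuous_const).inter
      (isClosed_iInter fun _ => isClosed_eq (by fun_prop) continuous_const))

end Coupling

section Kantorovich

variable {X : Type*}

theorem expCost_mono (μ : X × X → ℝ≥0∞) : Monotone fun E => expCost E μ :=
  fun _ _ hE => ENNReal.tsum_le_tsum fun p => mul_le_mul_left (hE p) _

theorem lowerSemicontinuous_expCost (E : X × X → ℝ≥0∞) : LowerSemicontinuous (expCost E) :=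
  lowerSemicontinuous_tsum fun p =>
    (ENNReal.lowerSemicontinuous_const_mul (E p)).comp (continuous_apply p)

theorem expCost_iSup {ι : Type*} [Preorder ι] [IsDirectedOrder ι] {E : ι → X × X → ℝ≥0∞}
    (hE : Monotone E) (μ : X × X → ℝ≥0∞) : expCost (⨆ i, E i) μ = ⨆ i, expCost (E i) μ := by
  simp only [expCost, iSup_apply, ENNReal.iSup_mul]
  exact ENNReal.tsum_iSup_of_monotone fun _ _ h p => mul_le_mul_left (hE h p) _

theorem kant_mono (μ₁ μ₂ : X → ℝ≥0∞) : Monotone fun E : X × X → ℝ≥0∞ => kant E μ₁ μ₂ :=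
  fun _ _ hE => iInf₂_mono fun μ _ => expCost_mono μ hE

theorem kant_iSup_of_finite_support {μ₁ μ₂ : X → ℝ≥0∞} (hfin₁ : (Function.support μ₁).Finite)
    (hfin₂ : (Function.support μ₂).Finite) {ι : Type*} [Preorder ι] [IsDirectedOrder ι]
    [Nonempty ι] {E : ι → X × X → ℝ≥0∞} (hE : Monotone E) :
    kant (⨆ i, E i) μ₁ μ₂ = ⨆ i, kant (E i) μ₁ μ₂ := by
  simp only [kant, expCost_iSup hE]
  exact (isClosed_setOf_isCoupling hfin₁ hfin₂).isCompact.iInf_iSup_eq_iSup_iInf_of_monotone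
    (fun _ _ h μ => expCost_mono μ (hE h)) fun i => lowerSemicontinuous_expCost (E i)

end Kantorovich

theorem kant_tendsto_of_finite_support {X : Type*} (μ₁ μ₂ : X → ℝ≥0∞)
    (hfin₁ : (Function.support μ₁).Finite) (hfin₂ : (Function.support μ₂).Finite)
    (En : ℕ → X × X → ℝ≥0∞) (hmono : Monotone En)
    (E : X × X → ℝ≥0∞)
    (hlim : ∀ p, Tendsto (fun n => En n p) atTop (nhds (E p))) :
    (kant E μ₁ μ₂ = ⨆ n, kant (En n) μ₁ μ₂) ∧
    Tendsto (fun n => kant (En n) μ₁ μ₂) atTop (nhds (kant E μ₁ μ₂)) := by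
  have hE : E = ⨆ n, En n := funext fun p => by
    rw [iSup_apply]
    exact tendsto_nhds_unique (hlim p) (tendsto_atTop_iSup fun _ _ h => hmono h p)
  have hkant : kant E μ₁ μ₂ = ⨆ n, kant (En n) μ₁ μ₂ :=
    hE ▸ kant_iSup_of_finite_support hfin₁ hfin₂ hmono
  exact ⟨hkant, hkant ▸ tendsto_atTop_iSup ((kant_mono μ₁ μ₂).comp hmono)⟩
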